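/- arXiv:2505.23423 — 2 statements merged into one kernel-verified Lean document; each statement's English description precedes it below -/
import Mathlib

section
/- (Rellich-type identity) Let g^{-1} = (g^{ij}) be a symmetric Lipschitz matrix field, B a C¹ vector field, γ a Lipschitz function, and f a smooth function. Then almost everywhere: 2γ(Δ_g f)(B·_g ∇_g f) = 2 div((γ B·_g ∇_g f)∇_g f) − div(γ B |∇_g f|²_g) + γ(div B |∇_g f|²_g − 2(∂_j B^k) g^{ji} ∂_i f ∂_k f + B^k ∂_k g^{ij} ∂_i f ∂_j f) + (B·_g ∇_g γ)|∇_g f|²_g − 2(∂_j γ) B^k g^{ij} ∂_i f ∂_k f, where ξ·_g η = ⟨gξ, η⟩, ∇_g f = g^{-1}∇f, and Δ_g f = div(g^{-1}∇f). -/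
noncomputable section
open scoped BigOperators
open Real

variable {n : ℕ}

/-- partial derivative in coordinate direction `i`. -/
def pd (i : Fin n) (f : (Fin n → ℝ) → ℝ) (x : Fin n → ℝ) : ℝ :=
  fderiv ℝ f x (Pi.single i 1)

/-- the g-gradient ∇_g f = g⁻¹ ∇f. -/
def gGrad (ginv : (Fin n → ℝ) → Matrix (Fin n) (Fin n) ℝ)
    (f : (Fin n → ℝ) → ℝ) (x : Fin n → ℝ) : Fin n → ℝ :=
  fun i => ∑ j, ginv x i j * pd j f x

/-- divergence of a vector field. -/
def vdiv (X : (Fin n → ℝ) → Fin n → ℝ) (x : Fin n → ℝ) : ℝ :=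
  ∑ i, pd i (fun y => X y i) x

/-- the g-Laplacian Δ_g f = div(g⁻¹∇f). -/
def gLap (ginv : (Fin n → ℝ) → Matrix (Fin n) (Fin n) ℝ)
    (f : (Fin n → ℝ) → ℝ) (x : Fin n → ℝ) : ℝ :=
  vdiv (gGrad ginv f) x

/-- the g-pairing ∇_g u ·_g ∇_g f = ⟨g⁻¹∇u, ∇f⟩;
    in particular `gPair ginv f f = |∇_g f|²_g`. -/
def gPair (ginv : (Fin n → ℝ) → Matrix (Fin n) (Fin n) ℝ)
    (u f : (Fin n → ℝ) → ℝ) (x : Fin n → ℝ) : ℝ :=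
  ∑ i, ∑ j, ginv x i j * pd i u x * pd j f x

/-! ### Auxiliary lemmas -/

lemma pd_mul {u v : (Fin n → ℝ) → ℝ} {x : Fin n → ℝ} (i : Fin n)
    (hu : DifferentiableAt ℝ u x) (hv : DifferentiableAt ℝ v x) :
    pd i (fun y => u y * v y) x = pd i u x * v x + u x * pd i v x := by
  unfold pd; rw [fderiv_fun_mul hu hv]; simp [smul_eq_mul]; ring

lemma pd_sum {ι : Type*} [Fintype ι] {F : ι → (Fin n → ℝ) → ℝ} {x : Fin n → ℝ} (i : Fin n)
    (h : ∀ k, DifferentiableAt ℝ (F k) x) :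
    pd i (fun y => ∑ k, F k y) x = ∑ k, pd i (F k) x := by
  unfold pd; rw [fderiv_fun_sum (fun k _ => h k)]; simp

lemma pd_diff {f : (Fin n → ℝ) → ℝ} {x : Fin n → ℝ} (hf : ContDiffAt ℝ (⊤ : ℕ∞) f x) (j : Fin n) :
    DifferentiableAt ℝ (pd j f) x := by
  have hd : DifferentiableAt ℝ (fderiv ℝ f) x :=
    (hf.fderiv_right (m := 1) (WithTop.coe_le_coe.mpr le_top)).differentiableAt one_ne_zero
  exact hd.clm_apply (differentiableAt_const _)

lemma pd_pd_symm {f : (Fin n → ℝ) → ℝ} {x : Fin n → ℝ}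
    (hf : ContDiffAt ℝ (⊤ : ℕ∞) f x) (i j : Fin n) :
    pd i (pd j f) x = pd j (pd i f) x := by
  have hsym : IsSymmSndFDerivAt ℝ f x := hf.isSymmSndFDerivAt (by simp only [minSmoothness_of_isRCLikeNormedField]; exact WithTop.coe_le_coe.mpr le_top)
  have hd : DifferentiableAt ℝ (fderiv ℝ f) x :=
    (hf.fderiv_right (m := 1) (WithTop.coe_le_coe.mpr le_top)).differentiableAt one_ne_zero
  have key : ∀ a b : Fin n, pd a (pd b f) x
      = fderiv ℝ (fderiv ℝ f) x (Pi.single a 1) (Pi.single b 1) := by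
    intro a b
    show fderiv ℝ (fun y => fderiv ℝ f y (Pi.single b 1)) x (Pi.single a 1) = _
    rw [fderiv_clm_apply hd (differentiableAt_const _)]
    simp
  rw [key i j, key j i, hsym]

section sum3
variable (F : Fin n → Fin n → Fin n → ℝ)

lemma sum3_swap12 : (∑ a, ∑ b, ∑ c, F a b c) = ∑ a, ∑ b, ∑ c, F b a c :=
  Finset.sum_comm

lemma sum3_swap23 : (∑ a, ∑ b, ∑ c, F a b c) = ∑ a, ∑ b, ∑ c, F a c b :=
  Finset.sum_congr rfl fun _ _ => Finset.sum_comm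

lemma sum3_rotR : (∑ a, ∑ b, ∑ c, F a b c) = ∑ a, ∑ b, ∑ c, F b c a :=
  (sum3_swap23 F).trans (sum3_swap12 _)

lemma sum3_rotL : (∑ a, ∑ b, ∑ c, F a b c) = ∑ a, ∑ b, ∑ c, F c a b :=
  (sum3_swap12 F).trans (sum3_swap23 _)

lemma sum3_swap13 : (∑ a, ∑ b, ∑ c, F a b c) = ∑ a, ∑ b, ∑ c, F c b a :=
  (sum3_rotR F).trans (sum3_swap23 _)
end sum3

/-- The purely algebraic core of the Rellich identity. -/
lemma rellich_key (a : ℝ) (b p da : Fin n → ℝ) (gm q db : Fin n → Fin n → ℝ)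
    (dg : Fin n → Fin n → Fin n → ℝ)
    (hgs : ∀ i j, gm i j = gm j i) (hqs : ∀ i j, q i j = q j i) :
    2 * a * (∑ i, ∑ j, (dg i i j * p j + gm i j * q i j)) * (∑ k, b k * p k) =
    2 * (∑ i, ((da i * (∑ k, b k * p k) + a * (∑ k, (db i k * p k + b k * q i k))) * (∑ j, gm i j * p j)
         + (a * (∑ k, b k * p k)) * (∑ j, (dg i i j * p j + gm i j * q i j))))
    - (∑ k, ((da k * b k + a * db k k) * (∑ i, ∑ j, gm i j * p i * p j)
         + (a * b k) * (∑ i, ∑ j, ((dg k i j * p i + gm i j * q k i) * p j + gm i j * p i * q k j))))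
    + a * ((∑ k, db k k) * (∑ i, ∑ j, gm i j * p i * p j)
         - 2 * ∑ j, ∑ k, ∑ i, db j k * gm j i * p i * p k
         + ∑ k, ∑ i, ∑ j, b k * dg k i j * p i * p j)
    + (∑ k, b k * da k) * (∑ i, ∑ j, gm i j * p i * p j)
    - 2 * ∑ j, ∑ k, ∑ i, da j * b k * gm i j * p i * p k := by
  simp only [Finset.mul_sum, Finset.sum_mul, mul_add, add_mul, mul_sub, sub_mul,
    Finset.sum_add_distrib, Finset.sum_sub_distrib]
  rw [show (∑ x : Fin n, ∑ x1 : Fin n, ∑ i : Fin n, 2 * (a * (b i * p i) * (dg x x x1 * p x1)))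
      = ∑ x : Fin n, ∑ x1 : Fin n, ∑ i : Fin n, 2 * (a * (b x * p x) * (dg x1 x1 i * p i)) from
      sum3_rotR _,
    show (∑ x : Fin n, ∑ x1 : Fin n, ∑ i : Fin n, 2 * (a * (b i * p i) * (gm x x1 * q x x1)))
      = ∑ x : Fin n, ∑ x1 : Fin n, ∑ i : Fin n, 2 * (a * (b x * p x) * (gm x1 i * q x1 i)) from
      sum3_rotR _,
    show (∑ x : Fin n, ∑ x1 : Fin n, ∑ i : Fin n, a * b x * (gm x1 i * q x x1 * p i))
      = ∑ x : Fin n, ∑ x1 : Fin n, ∑ i : Fin n, a * b i * (gm x x1 * q i x * p x1) from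
      sum3_rotL _,
    show (∑ x : Fin n, ∑ x1 : Fin n, ∑ i : Fin n, a * b x * (gm x1 i * p x1 * q x i))
      = ∑ x : Fin n, ∑ x1 : Fin n, ∑ i : Fin n, a * b i * (gm x1 x * p x1 * q i x) from
      sum3_swap13 _,
    show (∑ x : Fin n, ∑ x1 : Fin n, ∑ i : Fin n, a * (db i i * (gm x x1 * p x * p x1)))
      = ∑ x : Fin n, ∑ x1 : Fin n, ∑ i : Fin n, a * (db x x * (gm x1 i * p x1 * p i)) from
      sum3_rotR _,
    show (∑ x : Fin n, ∑ x1 : Fin n, ∑ i : Fin n, a * (2 * (db x x1 * gm x i * p i * p x1)))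
      = ∑ x : Fin n, ∑ x1 : Fin n, ∑ i : Fin n, a * (2 * (db x i * gm x x1 * p x1 * p i)) from
      sum3_swap23 _,
    show (∑ x : Fin n, ∑ x1 : Fin n, ∑ i : Fin n, b i * da i * (gm x x1 * p x * p x1))
      = ∑ x : Fin n, ∑ x1 : Fin n, ∑ i : Fin n, b x * da x * (gm x1 i * p x1 * p i) from
      sum3_rotR _,
    show (∑ x : Fin n, ∑ x1 : Fin n, ∑ i : Fin n, 2 * (da x * b x1 * gm i x * p i * p x1))
      = ∑ x : Fin n, ∑ x1 : Fin n, ∑ i : Fin n, 2 * (da x * b i * gm x1 x * p x1 * p i) from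
      sum3_swap23 _]
  simp only [← Finset.sum_add_distrib, ← Finset.sum_sub_distrib]
  refine Finset.sum_congr rfl fun x _ => ?_
  refine Finset.sum_congr rfl fun x1 _ => ?_
  refine Finset.sum_congr rfl fun i _ => ?_
  rw [hgs x1 x, hqs i x]
  ring

/-- Rellich-type identity: for g⁻¹ symmetric C¹, B a C¹ vector field, γ Lipschitz
    (here: differentiable) and f smooth, pointwise on Ω:
    2γ(Δ_g f)(B·_g ∇_g f) = 2 div((γ B·_g ∇_g f)∇_g f) − div(γ B |∇_g f|²_g)
    + γ(div B |∇_g f|²_g − 2(∂_j B^k) g^{ji} ∂_i f ∂_k f + B^k ∂_k g^{ij} ∂_i f ∂_j f)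
    + (B·_g ∇_g γ)|∇_g f|²_g − 2(∂_j γ) B^k g^{ij} ∂_i f ∂_k f,
    where B ·_g ∇_g f = ⟨gB, g⁻¹∇f⟩ = ∑ₖ B^k ∂_k f. -/
theorem rellich_identity (Ω : Set (Fin n → ℝ)) (hΩ : IsOpen Ω)
    (ginv : (Fin n → ℝ) → Matrix (Fin n) (Fin n) ℝ)
    (hsym : ∀ x i j, ginv x i j = ginv x j i)
    (hg : ∀ i j, ContDiffOn ℝ 1 (fun x => ginv x i j) Ω)
    (B : (Fin n → ℝ) → Fin n → ℝ)
    (hB : ∀ k, ContDiffOn ℝ 1 (fun x => B x k) Ω)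
    (γ : (Fin n → ℝ) → ℝ) (hγ : DifferentiableOn ℝ γ Ω)
    (f : (Fin n → ℝ) → ℝ) (hf : ContDiffOn ℝ (⊤ : ℕ∞) f Ω)
    (x : Fin n → ℝ) (hx : x ∈ Ω) :
    2 * γ x * gLap ginv f x * (∑ k, B x k * pd k f x) =
      2 * vdiv (fun y => fun i => (γ y * ∑ k, B y k * pd k f y) * gGrad ginv f y i) x
      - vdiv (fun y => fun i => γ y * B y i * gPair ginv f f y) x
      + γ x * (vdiv B x * gPair ginv f f x
          - 2 * ∑ j, ∑ k, ∑ i, pd j (fun y => B y k) x * ginv x j i * pd i f x * pd k f x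
          + ∑ k, ∑ i, ∑ j, B x k * pd k (fun y => ginv y i j) x * pd i f x * pd j f x)
      + (∑ k, B x k * pd k γ x) * gPair ginv f f x
      - 2 * ∑ j, ∑ k, ∑ i, pd j γ x * B x k * ginv x i j * pd i f x * pd k f x := by
  have hnx : Ω ∈ nhds x := hΩ.mem_nhds hx
  have hfx : ContDiffAt ℝ (⊤ : ℕ∞) f x := (hf x hx).contDiffAt hnx
  have hγx : DifferentiableAt ℝ γ x := (hγ x hx).differentiableAt hnx
  have hBx : ∀ k, DifferentiableAt ℝ (fun y => B y k) x :=
    fun k => ((hB k x hx).contDiffAt hnx).differentiableAt one_ne_zero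
  have hgx : ∀ i j, DifferentiableAt ℝ (fun y => ginv y i j) x :=
    fun i j => ((hg i j x hx).contDiffAt hnx).differentiableAt one_ne_zero
  have hpdf : ∀ j, DifferentiableAt ℝ (pd j f) x := pd_diff hfx
  have hSd : DifferentiableAt ℝ (fun y => ∑ k, B y k * pd k f y) x :=
    DifferentiableAt.fun_sum fun k _ => (hBx k).mul (hpdf k)
  have hGd : ∀ i, DifferentiableAt ℝ (fun y => ∑ j, ginv y i j * pd j f y) x :=
    fun i => DifferentiableAt.fun_sum fun j _ => (hgx i j).mul (hpdf j)
  have hPd : DifferentiableAt ℝ (fun y => ∑ i, ∑ j, ginv y i j * pd i f y * pd j f y) x :=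
    DifferentiableAt.fun_sum fun i _ => DifferentiableAt.fun_sum fun j _ =>
      ((hgx i j).mul (hpdf i)).mul (hpdf j)
  have e1 : gLap ginv f x
      = ∑ i, ∑ j, (pd i (fun y => ginv y i j) x * pd j f x + ginv x i j * pd i (pd j f) x) := by
    show (∑ i, pd i (fun y => gGrad ginv f y i) x) = _
    refine Finset.sum_congr rfl fun i _ => ?_
    have h0 : (fun y => gGrad ginv f y i) = fun y => ∑ j, ginv y i j * pd j f y := rfl
    rw [h0, pd_sum (F := fun j y => ginv y i j * pd j f y) i (fun j => (hgx i j).mul (hpdf j))]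
    refine Finset.sum_congr rfl fun j _ => ?_
    exact pd_mul i (hgx i j) (hpdf j)
  have e2 : vdiv (fun y => fun i => (γ y * ∑ k, B y k * pd k f y) * gGrad ginv f y i) x
      = ∑ i, ((pd i γ x * (∑ k, B x k * pd k f x)
            + γ x * (∑ k, (pd i (fun y => B y k) x * pd k f x + B x k * pd i (pd k f) x)))
          * (∑ j, ginv x i j * pd j f x)
        + (γ x * (∑ k, B x k * pd k f x))
          * (∑ j, (pd i (fun y => ginv y i j) x * pd j f x + ginv x i j * pd i (pd j f) x))) := by
    show (∑ i, pd i (fun y => (γ y * ∑ k, B y k * pd k f y) * gGrad ginv f y i) x) = _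
    refine Finset.sum_congr rfl fun i _ => ?_
    have h1 : pd i (fun y => (γ y * ∑ k, B y k * pd k f y) * gGrad ginv f y i) x
        = pd i (fun y => γ y * ∑ k, B y k * pd k f y) x * (∑ j, ginv x i j * pd j f x)
          + (γ x * ∑ k, B x k * pd k f x) * pd i (fun y => ∑ j, ginv y i j * pd j f y) x :=
      pd_mul i (hγx.mul hSd) (hGd i)
    have h2 : pd i (fun y => γ y * ∑ k, B y k * pd k f y) x
        = pd i γ x * (∑ k, B x k * pd k f x) + γ x * pd i (fun y => ∑ k, B y k * pd k f y) x :=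
      pd_mul i hγx hSd
    have h3 : pd i (fun y => ∑ k, B y k * pd k f y) x
        = ∑ k, (pd i (fun y => B y k) x * pd k f x + B x k * pd i (pd k f) x) := by
      rw [pd_sum (F := fun k y => B y k * pd k f y) i (fun k => (hBx k).mul (hpdf k))]
      exact Finset.sum_congr rfl fun k _ => pd_mul i (hBx k) (hpdf k)
    have h4 : pd i (fun y => ∑ j, ginv y i j * pd j f y) x
        = ∑ j, (pd i (fun y => ginv y i j) x * pd j f x + ginv x i j * pd i (pd j f) x) := by
      rw [pd_sum (F := fun j y => ginv y i j * pd j f y) i (fun j => (hgx i j).mul (hpdf j))]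
      exact Finset.sum_congr rfl fun j _ => pd_mul i (hgx i j) (hpdf j)
    rw [h1, h2, h3, h4]
  have e3 : vdiv (fun y => fun i => γ y * B y i * gPair ginv f f y) x
      = ∑ k, ((pd k γ x * B x k + γ x * pd k (fun y => B y k) x)
            * (∑ i, ∑ j, ginv x i j * pd i f x * pd j f x)
        + (γ x * B x k)
            * (∑ i, ∑ j, ((pd k (fun y => ginv y i j) x * pd i f x
                  + ginv x i j * pd k (pd i f) x) * pd j f x
                + ginv x i j * pd i f x * pd k (pd j f) x))) := by
    show (∑ k, pd k (fun y => γ y * B y k * gPair ginv f f y) x) = _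
    refine Finset.sum_congr rfl fun k _ => ?_
    have h1 : pd k (fun y => γ y * B y k * gPair ginv f f y) x
        = pd k (fun y => γ y * B y k) x * (∑ i, ∑ j, ginv x i j * pd i f x * pd j f x)
          + (γ x * B x k) * pd k (fun y => ∑ i, ∑ j, ginv y i j * pd i f y * pd j f y) x :=
      pd_mul k (hγx.mul (hBx k)) hPd
    have h2 : pd k (fun y => γ y * B y k) x = pd k γ x * B x k + γ x * pd k (fun y => B y k) x :=
      pd_mul k hγx (hBx k)
    have h3 : pd k (fun y => ∑ i, ∑ j, ginv y i j * pd i f y * pd j f y) x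
        = ∑ i, ∑ j, ((pd k (fun y => ginv y i j) x * pd i f x
              + ginv x i j * pd k (pd i f) x) * pd j f x
            + ginv x i j * pd i f x * pd k (pd j f) x) := by
      rw [pd_sum (F := fun i y => ∑ j, ginv y i j * pd i f y * pd j f y) k (fun i => DifferentiableAt.fun_sum fun j _ => ((hgx i j).mul (hpdf i)).mul (hpdf j))]
      refine Finset.sum_congr rfl fun i _ => ?_
      rw [pd_sum (F := fun j y => ginv y i j * pd i f y * pd j f y) k (fun j => ((hgx i j).mul (hpdf i)).mul (hpdf j))]
      refine Finset.sum_congr rfl fun j _ => ?_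
      have ha : pd k (fun y => ginv y i j * pd i f y * pd j f y) x
          = pd k (fun y => ginv y i j * pd i f y) x * pd j f x
            + (ginv x i j * pd i f x) * pd k (pd j f) x :=
        pd_mul k ((hgx i j).mul (hpdf i)) (hpdf j)
      have hb : pd k (fun y => ginv y i j * pd i f y) x
          = pd k (fun y => ginv y i j) x * pd i f x + ginv x i j * pd k (pd i f) x :=
        pd_mul k (hgx i j) (hpdf i)
      rw [ha, hb]
    rw [h1, h2, h3]
  rw [e1, e2, e3]
  exact rellich_key (γ x) (fun k => B x k) (fun i => pd i f x) (fun j => pd j γ x)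
    (fun i j => ginv x i j) (fun i j => pd i (pd j f) x)
    (fun j k => pd j (fun y => B y k) x) (fun k i j => pd k (fun y => ginv y i j) x)
    (hsym x) (pd_pd_symm hfx)
end
end

section
/- Let g^{-1} satisfy λ^{-1}|ξ|² ≤ ⟨g^{-1}(x)ξ,ξ⟩ ≤ λ|ξ|², be Lipschitz with constant Λ, and g^{-1}(0) = I. Let σ(x)=|x|, w = ψ(σ) with ψ the singular weight with parameter ε ∈ (0,1]. Then there is C ≥ 1 depending only on λ, Λ, ε such that on B₁∖{0}: C^{−1}σ ≤ w ≤ σ and C^{−1} ≤ |∇_g w|_g ≤ C; moreover λ^{−1}σ^{−2}/(1+σ^ε)² ≤ |∇_g w|²_g/w² ≤ λσ^{−2}, and in particular |∇_g w|²_g/w² ≥ λ^{−1}σ^{−2}/4 for σ ≤ 1. -/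
noncomputable section
open scoped BigOperators
open Real

variable {n : ℕ}

/-- the Euclidean norm σ(x) = |x| on ℝⁿ. -/
def sigma' (x : Fin n → ℝ) : ℝ := Real.sqrt (∑ i, x i ^ 2)

/-- the singular weight ψ. -/
def psi (ε s : ℝ) : ℝ :=
  s * Real.exp (-∫ t in (0:ℝ)..s, 1 / (t ^ (1 - ε) * (1 + t ^ ε)))

/-! The weight satisfies `ψ'(s) = e^{-F(s)} / (1 + s^ε)` with `F(s) = ∫₀ˢ dt / (t^{1-ε} (1 + t^ε))`,
and `F(1) < ∞` because the integrand is at most `t^{ε-1}`; hence `e^{-F(σ)} ∈ [e^{-F(1)}, 1]` on `B₁`.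
Since `w` is radial, `∇w = ψ'(σ) x / σ`, so `|∇_g w|²_g = ψ'(σ)² ⟨g⁻¹x, x⟩ / σ²`, and ellipticity
puts `⟨g⁻¹x, x⟩ / σ²` in `[λ⁻¹, λ]`. The rest is arithmetic, with `C = 2λ e^{F(1)}`. -/

open MeasureTheory Set

def psiKernel (ε t : ℝ) : ℝ := 1 / (t ^ (1 - ε) * (1 + t ^ ε))

def psiExponent (ε s : ℝ) : ℝ := ∫ t in (0:ℝ)..s, psiKernel ε t

lemma psi_eq_mul_exp (ε s : ℝ) : psi ε s = s * exp (-psiExponent ε s) := rfl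

section weight

variable {ε s t : ℝ}

lemma psiKernel_nonneg (ht : 0 ≤ t) : 0 ≤ psiKernel ε t := by
  unfold psiKernel; positivity

lemma psiKernel_le_rpow (ht : 0 < t) : psiKernel ε t ≤ t ^ (ε - 1) := by
  have h1 : 0 < t ^ (1 - ε) := rpow_pos_of_pos ht _
  have h2 : 0 < t ^ ε := rpow_pos_of_pos ht _
  rw [psiKernel, show ε - 1 = -(1 - ε) by ring, rpow_neg ht.le, ← one_div]
  exact one_div_le_one_div_of_le h1 (le_mul_of_one_le_right h1.le (by linarith))

lemma mul_psiKernel (ht : 0 < t) : t * psiKernel ε t = t ^ ε / (1 + t ^ ε) := by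
  have h : t ^ (1 - ε) * t ^ ε = t := by rw [← rpow_add ht]; norm_num
  have h1 : 0 < t ^ (1 - ε) := rpow_pos_of_pos ht _
  have h2 : 0 < t ^ ε := rpow_pos_of_pos ht _
  rw [psiKernel]
  field_simp
  linear_combination -h

lemma continuousOn_psiKernel (ε : ℝ) : ContinuousOn (psiKernel ε) (Ioi 0) := by
  intro t (ht : 0 < t)
  have hden : t ^ (1 - ε) * (1 + t ^ ε) ≠ 0 := by
    have := rpow_pos_of_pos ht ε
    exact (mul_pos (rpow_pos_of_pos ht _) (by linarith)).ne'
  exact (continuousAt_const.div ((continuousAt_id.rpow_const (Or.inl ht.ne')).mul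
    (continuousAt_const.add (continuousAt_id.rpow_const (Or.inl ht.ne')))) hden).continuousWithinAt

lemma intervalIntegrable_psiKernel (hε : 0 < ε) (hs : 0 ≤ s) :
    IntervalIntegrable (psiKernel ε) volume 0 s := by
  refine (intervalIntegral.intervalIntegrable_rpow' (r := ε - 1) (by linarith)).mono_fun ?_ ?_
  · refine ((continuousOn_psiKernel ε).mono ?_).aestronglyMeasurable measurableSet_uIoc
    rw [uIoc_of_le hs]
    exact Ioc_subset_Ioi_self
  · filter_upwards [ae_restrict_mem measurableSet_uIoc] with t ht
    rw [uIoc_of_le hs] at ht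
    rw [norm_of_nonneg (psiKernel_nonneg ht.1.le), norm_of_nonneg (rpow_pos_of_pos ht.1 _).le]
    exact psiKernel_le_rpow ht.1

lemma psiExponent_nonneg (ε : ℝ) (hs : 0 ≤ s) : 0 ≤ psiExponent ε s :=
  intervalIntegral.integral_nonneg hs fun _ ht => psiKernel_nonneg ht.1

lemma psiExponent_mono (hε : 0 < ε) (hs : 0 ≤ s) (hst : s ≤ t) :
    psiExponent ε s ≤ psiExponent ε t := by
  refine intervalIntegral.integral_mono_interval le_rfl hs hst ?_
    (intervalIntegrable_psiKernel hε (hs.trans hst))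
  filter_upwards [ae_restrict_mem measurableSet_Ioc] with u hu
  exact psiKernel_nonneg hu.1.le

lemma hasDerivAt_psiExponent (hε : 0 < ε) (hs : 0 < s) :
    HasDerivAt (psiExponent ε) (psiKernel ε s) s :=
  intervalIntegral.integral_hasDerivAt_right (intervalIntegrable_psiKernel hε hs.le)
    ((continuousOn_psiKernel ε).stronglyMeasurableAtFilter isOpen_Ioi s hs)
    ((continuousOn_psiKernel ε).continuousAt (Ioi_mem_nhds hs))

lemma exp_neg_psiExponent_bounds (hε : 0 < ε) (hs : 0 ≤ s) (hs1 : s ≤ 1) :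
    exp (-psiExponent ε 1) ≤ exp (-psiExponent ε s) ∧ exp (-psiExponent ε s) ≤ 1 :=
  ⟨exp_le_exp.mpr (neg_le_neg (psiExponent_mono hε hs hs1)),
    exp_le_one_iff.mpr (neg_nonpos.mpr (psiExponent_nonneg ε hs))⟩

lemma hasDerivAt_psi (hε : 0 < ε) (hs : 0 < s) :
    HasDerivAt (psi ε) (exp (-psiExponent ε s) / (1 + s ^ ε)) s := by
  have h : HasDerivAt (fun u => u * exp (-psiExponent ε u))
      (1 * exp (-psiExponent ε s) + s * (exp (-psiExponent ε s) * -psiKernel ε s)) s :=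
    (hasDerivAt_id s).mul (hasDerivAt_psiExponent hε hs).neg.exp
  refine h.congr_deriv ?_
  have hB : 0 < 1 + s ^ ε := by linarith [rpow_pos_of_pos hs ε]
  rw [show ∀ e k : ℝ, 1 * e + s * (e * -k) = e * (1 - s * k) by intros; ring, mul_psiKernel hs]
  field_simp
  ring

end weight

section radial

variable {x : Fin n → ℝ}

lemma sigma'_sq (x : Fin n → ℝ) : sigma' x ^ 2 = ∑ i, x i ^ 2 :=
  sq_sqrt (Finset.sum_nonneg fun i _ => sq_nonneg (x i))

lemma sum_sq_pos (hx : x ≠ 0) : 0 < ∑ i, x i ^ 2 := by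
  obtain ⟨i, hi⟩ := Function.ne_iff.mp hx
  exact Finset.sum_pos' (fun i _ => sq_nonneg (x i)) ⟨i, Finset.mem_univ i, sq_pos_of_ne_zero hi⟩

lemma sigma'_pos (hx : x ≠ 0) : 0 < sigma' x :=
  sqrt_pos.mpr (sum_sq_pos hx)

lemma hasFDerivAt_sigma' (hx : x ≠ 0) :
    HasFDerivAt sigma' ((sigma' x)⁻¹ • ∑ i, x i • ContinuousLinearMap.proj (R := ℝ) i) x := by
  have hsq : HasFDerivAt (fun y : Fin n → ℝ => ∑ i, y i ^ 2)
      (∑ i, (2 * x i) • ContinuousLinearMap.proj (R := ℝ) (φ := fun _ : Fin n => ℝ) i) x := by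
    refine HasFDerivAt.fun_sum fun i _ => ((hasFDerivAt_apply i x).pow 2).congr_fderiv ?_
    ext v
    simp
  refine (hsq.sqrt (sum_sq_pos hx).ne').congr_fderiv ?_
  change (1 / (2 * sigma' x)) • _ = _
  ext v
  simp [mul_assoc, ← Finset.mul_sum]

variable {f : ℝ → ℝ} {f' : ℝ}

lemma pd_comp_sigma' (hf : HasDerivAt f f' (sigma' x)) (hx : x ≠ 0) (j : Fin n) :
    pd j (fun y => f (sigma' y)) x = f' * (x j / sigma' x) := by
  have h : HasFDerivAt (fun y => f (sigma' y)) _ x := hf.comp_hasFDerivAt x (hasFDerivAt_sigma' hx)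
  rw [pd, h.fderiv]
  simp [Pi.single_apply, div_eq_inv_mul]

lemma gPair_comp_sigma' (ginv : (Fin n → ℝ) → Matrix (Fin n) (Fin n) ℝ)
    (hf : HasDerivAt f f' (sigma' x)) (hx : x ≠ 0) :
    gPair ginv (fun y => f (sigma' y)) (fun y => f (sigma' y)) x
      = f' ^ 2 * ((∑ i, ∑ j, ginv x i j * x i * x j) / sigma' x ^ 2) := by
  simp only [gPair, pd_comp_sigma' hf hx, Finset.sum_div, Finset.mul_sum]
  refine Finset.sum_congr rfl fun i _ => Finset.sum_congr rfl fun j _ => ?_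
  ring

end radial

section bounds

variable {lam q : ℝ}

lemma sqrt_sq_mul_bounds {a E : ℝ} (hlam : 1 ≤ lam) (hq : lam⁻¹ ≤ q ∧ q ≤ lam) (hE : 0 < E)
    (ha : E / 2 ≤ a ∧ a ≤ 1) :
    (2 * lam / E)⁻¹ ≤ √(a ^ 2 * q) ∧ √(a ^ 2 * q) ≤ 2 * lam / E := by
  have hlam0 : 0 < lam := by linarith
  have hq0 : 0 ≤ q := (inv_pos.mpr hlam0).le.trans hq.1
  have ha0 : 0 ≤ a := by linarith
  constructor
  · rw [inv_div, le_sqrt (by positivity) (by positivity)]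
    calc (E / (2 * lam)) ^ 2 = (E / 2) ^ 2 * lam⁻¹ * lam⁻¹ := by field_simp
      _ ≤ (E / 2) ^ 2 * lam⁻¹ * 1 := by gcongr; exact inv_le_one_of_one_le₀ hlam
      _ ≤ a ^ 2 * q := by rw [mul_one]; gcongr; exacts [ha.1, hq.1]
  · have hlamC : lam ≤ 2 * lam / E := by rw [le_div_iff₀ hE]; nlinarith
    rw [sqrt_le_left (by positivity)]
    calc a ^ 2 * q ≤ 1 * lam := by gcongr; exacts [pow_le_one₀ ha0 ha.2, hq.2]
      _ ≤ lam ^ 2 := by nlinarith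
      _ ≤ (2 * lam / E) ^ 2 := by gcongr

lemma div_sq_mul_one_add_sq_bounds {s B : ℝ} (hlam : 0 < lam) (hq : lam⁻¹ ≤ q ∧ q ≤ lam)
    (hs : 0 < s) (hB : 0 ≤ B ∧ B ≤ 1) :
    (lam⁻¹ / (s ^ 2 * (1 + B) ^ 2) ≤ q / (s ^ 2 * (1 + B) ^ 2) ∧
      q / (s ^ 2 * (1 + B) ^ 2) ≤ lam / s ^ 2) ∧
    lam⁻¹ / s ^ 2 / 4 ≤ q / (s ^ 2 * (1 + B) ^ 2) := by
  have h1 : 1 ≤ (1 + B) ^ 2 := one_le_pow₀ (by linarith)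
  have h4 : (1 + B) ^ 2 ≤ 4 := by nlinarith
  refine ⟨⟨by gcongr; exact hq.1, ?_⟩, ?_⟩
  · exact div_le_div₀ hlam.le hq.2 (by positivity) (le_mul_of_one_le_right (by positivity) h1)
  · rw [div_div]
    exact div_le_div₀ ((inv_pos.mpr hlam).le.trans hq.1) hq.1 (by positivity) (by gcongr)

end bounds

theorem weight_bounds_general (lam Lam ε : ℝ) (hlam : 1 ≤ lam) (hε : 0 < ε) :
    ∃ C : ℝ, 1 ≤ C ∧
      ∀ (ginv : (Fin n → ℝ) → Matrix (Fin n) (Fin n) ℝ),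
        (∀ x i j, ginv x i j = ginv x j i) →
        (∀ (x ξ : Fin n → ℝ),
          lam⁻¹ * (∑ i, ξ i ^ 2) ≤ ∑ i, ∑ j, ginv x i j * ξ i * ξ j) →
        (∀ (x ξ : Fin n → ℝ),
          (∑ i, ∑ j, ginv x i j * ξ i * ξ j) ≤ lam * ∑ i, ξ i ^ 2) →
        (∀ x y : Fin n → ℝ, ∑ i, ∑ j, |ginv x i j - ginv y i j| ≤ Lam * sigma' (x - y)) →
        ginv 0 = 1 →
        ∀ x : Fin n → ℝ, x ≠ 0 → sigma' x < 1 →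
          (C⁻¹ * sigma' x ≤ psi ε (sigma' x) ∧ psi ε (sigma' x) ≤ sigma' x) ∧
          (C⁻¹ ≤ Real.sqrt (gPair ginv (fun y => psi ε (sigma' y)) (fun y => psi ε (sigma' y)) x) ∧
            Real.sqrt (gPair ginv (fun y => psi ε (sigma' y)) (fun y => psi ε (sigma' y)) x) ≤ C) ∧
          (lam⁻¹ / (sigma' x ^ 2 * (1 + sigma' x ^ ε) ^ 2) ≤
              gPair ginv (fun y => psi ε (sigma' y)) (fun y => psi ε (sigma' y)) x /
                psi ε (sigma' x) ^ 2 ∧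
            gPair ginv (fun y => psi ε (sigma' y)) (fun y => psi ε (sigma' y)) x /
                psi ε (sigma' x) ^ 2 ≤ lam / sigma' x ^ 2) ∧
          lam⁻¹ / sigma' x ^ 2 / 4 ≤
            gPair ginv (fun y => psi ε (sigma' y)) (fun y => psi ε (sigma' y)) x /
              psi ε (sigma' x) ^ 2 := by
  set E := exp (-psiExponent ε 1)
  have hE : 0 < E := exp_pos _
  have hE1 : E ≤ 1 := (exp_neg_psiExponent_bounds hε zero_le_one le_rfl).2
  refine ⟨2 * lam / E, (one_le_div hE).mpr (by linarith), fun ginv _ hlow hup _ _ x hx hx1 => ?_⟩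
  have hs : 0 < sigma' x := sigma'_pos hx
  have hq : lam⁻¹ ≤ (∑ i, ∑ j, ginv x i j * x i * x j) / sigma' x ^ 2 ∧
      (∑ i, ∑ j, ginv x i j * x i * x j) / sigma' x ^ 2 ≤ lam := by
    rw [le_div_iff₀ (by positivity), div_le_iff₀ (by positivity), sigma'_sq]
    exact ⟨hlow x x, hup x x⟩
  have hB : 0 ≤ sigma' x ^ ε ∧ sigma' x ^ ε ≤ 1 :=
    ⟨rpow_nonneg hs.le ε, rpow_le_one hs.le hx1.le hε.le⟩
  have he := exp_neg_psiExponent_bounds hε hs.le hx1.le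
  rw [gPair_comp_sigma' ginv (hasDerivAt_psi hε hs) hx, psi_eq_mul_exp]
  generalize (∑ i, ∑ j, ginv x i j * x i * x j) / sigma' x ^ 2 = q at hq ⊢
  generalize sigma' x ^ ε = B at hB ⊢
  generalize exp (-psiExponent ε (sigma' x)) = e at he ⊢
  have he0 : 0 < e := hE.trans_le he.1
  refine ⟨⟨?_, mul_le_of_le_one_right hs.le he.2⟩, sqrt_sq_mul_bounds hlam hq hE ⟨?_, ?_⟩, ?_⟩
  · rw [inv_div, mul_comm]
    gcongr
    exact (div_le_self hE.le (by linarith)).trans he.1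
  · calc E / 2 ≤ e / 2 := by gcongr; exact he.1
      _ ≤ e / (1 + B) := div_le_div_of_nonneg_left he0.le (by linarith) (by linarith)
  · exact div_le_one_of_le₀ (by linarith) (by linarith)
  · rw [show (e / (1 + B)) ^ 2 * q / (sigma' x * e) ^ 2 = q / (sigma' x ^ 2 * (1 + B) ^ 2) by
      field_simp]
    exact div_sq_mul_one_add_sq_bounds (by linarith) hq hs hB

/-- Bounds for the weight w = ψ(σ): there is C ≥ 1 depending only on λ, Λ, ε with
    C⁻¹σ ≤ w ≤ σ and C⁻¹ ≤ |∇_g w|_g ≤ C on B₁∖{0}; moreover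
    λ⁻¹σ⁻²/(1+σ^ε)² ≤ |∇_g w|²_g/w² ≤ λσ⁻² and |∇_g w|²_g/w² ≥ λ⁻¹σ⁻²/4. -/
theorem weight_bounds (lam Lam ε : ℝ) (hlam : 1 ≤ lam) (hLam : 0 < Lam)
    (hε : 0 < ε) (hε1 : ε ≤ 1) :
    ∃ C : ℝ, 1 ≤ C ∧
      ∀ (ginv : (Fin n → ℝ) → Matrix (Fin n) (Fin n) ℝ),
        (∀ x i j, ginv x i j = ginv x j i) →
        (∀ (x ξ : Fin n → ℝ),
          lam⁻¹ * (∑ i, ξ i ^ 2) ≤ ∑ i, ∑ j, ginv x i j * ξ i * ξ j) →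
        (∀ (x ξ : Fin n → ℝ),
          (∑ i, ∑ j, ginv x i j * ξ i * ξ j) ≤ lam * ∑ i, ξ i ^ 2) →
        (∀ x y : Fin n → ℝ, ∑ i, ∑ j, |ginv x i j - ginv y i j| ≤ Lam * sigma' (x - y)) →
        ginv 0 = 1 →
        ∀ x : Fin n → ℝ, x ≠ 0 → sigma' x < 1 →
          (C⁻¹ * sigma' x ≤ psi ε (sigma' x) ∧ psi ε (sigma' x) ≤ sigma' x) ∧
          (C⁻¹ ≤ Real.sqrt (gPair ginv (fun y => psi ε (sigma' y)) (fun y => psi ε (sigma' y)) x) ∧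
            Real.sqrt (gPair ginv (fun y => psi ε (sigma' y)) (fun y => psi ε (sigma' y)) x) ≤ C) ∧
          (lam⁻¹ / (sigma' x ^ 2 * (1 + sigma' x ^ ε) ^ 2) ≤
              gPair ginv (fun y => psi ε (sigma' y)) (fun y => psi ε (sigma' y)) x /
                psi ε (sigma' x) ^ 2 ∧
            gPair ginv (fun y => psi ε (sigma' y)) (fun y => psi ε (sigma' y)) x /
                psi ε (sigma' x) ^ 2 ≤ lam / sigma' x ^ 2) ∧
          lam⁻¹ / sigma' x ^ 2 / 4 ≤
            gPair ginv (fun y => psi ε (sigma' y)) (fun y => psi ε (sigma' y)) x /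
              psi ε (sigma' x) ^ 2 :=
  weight_bounds_general lam Lam ε hlam hε
end
end
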